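/- For every even n ≥ 6, the number of permutations of [n] whose antidiagonal X-ray is palindromic strictly exceeds the number of involutions of [n]: #{π ∈ S_n : x_k(π) = x_{2n−k}(π) for all k} > #{π ∈ S_n : π = π⁻¹}. -/

import Mathlib

def xray (n : ℕ) (π : Equiv.Perm (Fin n)) (k : ℕ) : ℕ :=
  (Finset.univ.filter (fun i : Fin n => ((i : ℕ) + 1) + ((π i : ℕ) + 1) = k + 1)).card

lemma xray_inv (n : ℕ) (σ : Equiv.Perm (Fin n)) (k : ℕ) :
    xray n σ⁻¹ k = xray n σ k := by
  unfold xray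
  refine Finset.card_nbij' (fun i => σ⁻¹ i) (fun j => σ j) ?_ ?_ ?_ ?_
  · intro i hi
    simp only [Finset.mem_coe, Finset.mem_filter, Finset.mem_univ, true_and,
      Equiv.Perm.coe_inv, Equiv.apply_symm_apply] at hi ⊢
    omega
  · intro j hj
    simp only [Finset.mem_coe, Finset.mem_filter, Finset.mem_univ, true_and,
      Equiv.Perm.coe_inv, Equiv.symm_apply_apply] at hj ⊢
    omega
  · intro i _; simp
  · intro j _; simp

lemma xray_conj (n : ℕ) (σ : Equiv.Perm (Fin n)) (k : ℕ) (h1 : 1 ≤ k)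
    (h2 : k ≤ 2 * n - 1) :
    xray n (Fin.revPerm * σ⁻¹ * Fin.revPerm) k = xray n σ (2 * n - k) := by
  unfold xray
  refine Finset.card_nbij' (fun i => σ⁻¹ (Fin.rev i)) (fun j => Fin.rev (σ j)) ?_ ?_ ?_ ?_
  · intro i hi
    simp only [Finset.mem_coe, Finset.mem_filter, Finset.mem_univ, true_and,
      Equiv.Perm.mul_apply, Fin.revPerm_apply, Equiv.Perm.coe_inv, Equiv.apply_symm_apply,
      Fin.val_rev] at hi ⊢
    have h3 : (i : ℕ) < n := i.isLt
    have h4 : ((σ⁻¹ (Fin.rev i)) : ℕ) < n := (σ⁻¹ (Fin.rev i)).isLt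
    omega
  · intro j hj
    simp only [Finset.mem_coe, Finset.mem_filter, Finset.mem_univ, true_and,
      Equiv.Perm.mul_apply, Fin.revPerm_apply, Fin.rev_rev,
      Equiv.Perm.coe_inv, Equiv.symm_apply_apply, Fin.val_rev] at hj ⊢
    have h3 : (j : ℕ) < n := j.isLt
    have h4 : ((σ j) : ℕ) < n := (σ j).isLt
    omega
  · intro i _; simp [Fin.rev_rev]
  · intro j _; simp

set_option maxHeartbeats 1000000 in
/-- For even `n ≥ 6`, the number of permutations of `[n]` with palindromic
antidiagonal X-ray strictly exceeds the number of involutions of `[n]`. -/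
theorem palindromic_gt_involutions (n : ℕ) (hn : Even n) (hn6 : 6 ≤ n) :
    {π : Equiv.Perm (Fin n) |
        ∀ k : ℕ, 1 ≤ k → k ≤ 2 * n - 1 → xray n π k = xray n π (2 * n - k)}.ncard
      >
    {π : Equiv.Perm (Fin n) | π = π⁻¹}.ncard := by
  classical
  set w : Equiv.Perm (Fin n) := Fin.revPerm with hw
  have hww : w * w = 1 := by
    ext i
    simp [hw, Fin.rev_rev]
  have hww' : ∀ x : Equiv.Perm (Fin n), w * (w * x) = x := by
    intro x; rw [← mul_assoc, hww, one_mul]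
  have hwinv : w⁻¹ = w := inv_eq_iff_mul_eq_one.mpr hww
  -- indices
  have h0 : (0 : ℕ) < n := by omega
  have h1 : (1 : ℕ) < n := by omega
  have h2 : (2 : ℕ) < n := by omega
  set a0 : Fin n := ⟨0, h0⟩ with ha0
  set a1 : Fin n := ⟨1, h1⟩ with ha1
  set a2 : Fin n := ⟨2, h2⟩ with ha2
  set c : Equiv.Perm (Fin n) := Equiv.swap a0 a1 * Equiv.swap a1 a2 with hc
  set c' : Equiv.Perm (Fin n) := w * c * w with hc'
  set π₀ : Equiv.Perm (Fin n) := c * c' with hπ₀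
  -- c fixes everything with val ≥ 3
  have hcfix : ∀ i : Fin n, 3 ≤ (i : ℕ) → c i = i := by
    intro i hi
    have hne0 : i ≠ a0 := by simp [ha0, Fin.ext_iff]; omega
    have hne1 : i ≠ a1 := by simp [ha1, Fin.ext_iff]; omega
    have hne2 : i ≠ a2 := by simp [ha2, Fin.ext_iff]; omega
    simp [hc, Equiv.Perm.mul_apply, Equiv.swap_apply_of_ne_of_ne, hne0, hne1, hne2]
  -- c' fixes everything with val < n - 3
  have hc'fix : ∀ i : Fin n, (i : ℕ) < n - 3 → c' i = i := by
    intro i hi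
    have hfix : c (Fin.rev i) = Fin.rev i := by
      apply hcfix
      rw [Fin.val_rev]
      omega
    simp [hc', hw, Equiv.Perm.mul_apply, hfix, Fin.rev_rev]
  -- disjointness: c and c' commute
  have hdisj : Equiv.Perm.Disjoint c c' := by
    intro i
    by_cases hi : (i : ℕ) < n - 3
    · exact Or.inr (hc'fix i hi)
    · exact Or.inl (hcfix i (by omega))
  have hcomm : c * c' = c' * c := hdisj.commute.eq
  -- π₀ commutes with w
  have hcent : w * π₀ * w = π₀ := by
    have e2 : w * c' * w = c := by
      rw [hc']
      calc w * (w * c * w) * w = w * (w * (c * (w * w))) := by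
            simp only [mul_assoc]
        _ = c := by rw [hww, mul_one, hww']
    have e1 : w * π₀ * w = (w * c * w) * (w * c' * w) := by
      rw [hπ₀]
      calc w * (c * c') * w = w * (c * (c' * w)) := by simp only [mul_assoc]
        _ = w * (c * (w * (w * (c' * w)))) := by rw [hww']
        _ = (w * c * w) * (w * c' * w) := by simp only [mul_assoc]
    rw [e1, e2, ← hc', hπ₀, hcomm]
  have hπ₀w : π₀ * w = w * π₀ := by
    calc π₀ * w = (w * π₀ * w) * w := by rw [hcent]
      _ = w * (π₀ * (w * w)) := by simp only [mul_assoc]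
      _ = w * π₀ := by rw [hww, mul_one]
  -- π₀ values
  have hπ₀vals : π₀ a0 = a1 ∧ π₀ a1 = a2 := by
    have hne01 : a0 ≠ a1 := by simp [ha0, ha1, Fin.ext_iff]
    have hne02 : a0 ≠ a2 := by simp [ha0, ha2, Fin.ext_iff]
    have hne12 : a1 ≠ a2 := by simp [ha1, ha2, Fin.ext_iff]
    constructor
    · have h' : c' a0 = a0 := hc'fix a0 (by simp [ha0]; omega)
      have hc0 : c a0 = a1 := by
        rw [hc, Equiv.Perm.mul_apply, Equiv.swap_apply_of_ne_of_ne hne01 hne02,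
          Equiv.swap_apply_left]
      rw [hπ₀, Equiv.Perm.mul_apply, h', hc0]
    · have h' : c' a1 = a1 := hc'fix a1 (by simp [ha1]; omega)
      have hc1 : c a1 = a2 := by
        rw [hc, Equiv.Perm.mul_apply, Equiv.swap_apply_left,
          Equiv.swap_apply_of_ne_of_ne (Ne.symm hne02) (Ne.symm hne12)]
      rw [hπ₀, Equiv.Perm.mul_apply, h', hc1]
  have hnotinv : π₀ * π₀ ≠ 1 := by
    intro h
    have hval : π₀ (π₀ a0) = a0 := by
      have := congrArg (fun σ : Equiv.Perm (Fin n) => σ a0) h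
      simpa [Equiv.Perm.mul_apply] using this
    rw [hπ₀vals.1, hπ₀vals.2] at hval
    have : (2 : ℕ) = 0 := by
      have := congrArg Fin.val hval
      simpa [ha0, ha2] using this
    omega
  -- sets
  set S := {π : Equiv.Perm (Fin n) |
        ∀ k : ℕ, 1 ≤ k → k ≤ 2 * n - 1 → xray n π k = xray n π (2 * n - k)} with hS
  set T := {π : Equiv.Perm (Fin n) | π = π⁻¹} with hT
  have hinj : Function.Injective (fun π : Equiv.Perm (Fin n) => w * π) :=
    fun x y h => by simpa using mul_left_cancel h
  have himg : (fun π : Equiv.Perm (Fin n) => w * π) '' T ⊆ S := by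
    rintro σ ⟨π, hπ, rfl⟩
    have hπinv : π = π⁻¹ := hπ
    show w * π ∈ S
    intro k hk1 hk2
    have key : w * (w * π)⁻¹ * w = w * π := by
      rw [mul_inv_rev, ← hπinv, hwinv]
      calc w * (π * w) * w = w * (π * (w * w)) := by simp only [mul_assoc]
        _ = w * π := by rw [hww, mul_one]
    have hx := xray_conj n (w * π) k hk1 hk2
    rw [show Fin.revPerm = w from rfl, key] at hx
    exact hx
  -- π₀ ∈ S
  have hπ₀S : π₀ ∈ S := by
    intro k hk1 hk2
    have hconj : w * π₀⁻¹ * w = π₀⁻¹ := by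
      have h' := congrArg (fun σ : Equiv.Perm (Fin n) => σ⁻¹) hcent
      simp only [mul_inv_rev, hwinv] at h'
      rw [mul_assoc]
      exact h'
    have hx := xray_conj n π₀ k hk1 hk2
    rw [show Fin.revPerm = w from rfl, hconj, xray_inv] at hx
    exact hx
  -- π₀ not in the image
  have hπ₀nimg : π₀ ∉ (fun π : Equiv.Perm (Fin n) => w * π) '' T := by
    rintro ⟨π, hπ, hwπ⟩
    have hwπ' : w * π = π₀ := hwπ
    have hπinv : π = π⁻¹ := hπ
    have hπeq : π = w * π₀ := by rw [← hwπ', hww']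
    have hsq : π * π = 1 := by
      calc π * π = π * π⁻¹ := by rw [← hπinv]
        _ = 1 := mul_inv_cancel π
    apply hnotinv
    rw [hπeq] at hsq
    have h' : w * (π₀ * (w * π₀)) = 1 := by
      calc w * (π₀ * (w * π₀)) = (w * π₀) * (w * π₀) := by simp only [mul_assoc]
        _ = 1 := hsq
    have h'' : π₀ * (w * π₀) = w * (π₀ * π₀) := by
      rw [← mul_assoc, hπ₀w, mul_assoc]
    rw [h'', hww'] at h'
    exact h'
  -- conclude
  have hfin : S.Finite := Set.toFinite S
  have hss : (fun π : Equiv.Perm (Fin n) => w * π) '' T ⊂ S :=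
    ⟨himg, fun h => hπ₀nimg (h hπ₀S)⟩
  have hlt := Set.ncard_lt_ncard hss hfin
  rwa [Set.ncard_image_of_injective T hinj] at hlt
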